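/- arXiv:0905.0795 — 2 statements merged into one kernel-verified Lean document; each statement's English description precedes it below -/
import Mathlib

section
/- Let Ψ(z) = Σ_{k≥0} Ψ_k z^k satisfy Ψ(z)Ψ(−z)^t = Id, let r ∈ Mat_n(ℂ), l ≥ 1, and define the tangent action (rζ^l).Ψ_k = Ψ_{l+k} r − Σ_{p=1}^{l} Σ_{q=0}^{l−p} (−1)^{l−p−q} Ψ_q r Ψ_{l−p−q}^t Ψ_{p+k}. Then −((rζ^l).Ψ_3)Ψ_0^t + ((rζ^l).Ψ_2)Ψ_1^t − ((rζ^l).Ψ_1)Ψ_2^t + ((rζ^l).Ψ_0)Ψ_3^t = − Σ_{i=0}^{l+3} (−1)^i Ψ_{l+3−i} r Ψ_i^t. -/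
/-!
Put `E(z) = Ψ(z) r Ψ(-z)ᵀ`. Power series over a matrix ring are Dedekind-finite, so
`Ψ(-z)ᵀ Ψ(z) = 1` as well and `E Ψ = Ψ r`; splitting `z⁻ˡ E` into
its parts with negative and nonnegative exponents then shows that the tangent action is
`(rζ^l).Ψ = (z⁻ˡ E)₊ Ψ`. Consequently `((rζ^l).Ψ)(z) Ψ(-z)ᵀ = (z⁻ˡ E)₊`, and the identity compares
`z³`-coefficients: both sides are `-E_{l+3}`.
-/

open Matrix PowerSeries Finset

/-- The tangent action of `r ζ^l ∈ g₊` on the coefficients of the KP wave function: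
`(rζ^l).Ψ_k = Ψ_{l+k} r - ∑_{p=1}^{l} ∑_{q=0}^{l-p} (-1)^{l-p-q} Ψ_q r Ψ_{l-p-q}ᵗ Ψ_{p+k}`. -/
noncomputable def rAction {n : ℕ} (Ψ : ℕ → Matrix (Fin n) (Fin n) ℂ)
    (r : Matrix (Fin n) (Fin n) ℂ) (l k : ℕ) : Matrix (Fin n) (Fin n) ℂ :=
  Ψ (l + k) * r -
    ∑ p ∈ Finset.Icc 1 l, ∑ q ∈ Finset.range (l - p + 1),
      ((-1 : ℂ) ^ (l - p - q)) • (Ψ q * r * (Ψ (l - p - q))ᵀ * Ψ (p + k))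
namespace PowerSeries

variable {R : Type*}

instance [Ring R] [IsDedekindFiniteMonoid R] : IsDedekindFiniteMonoid R⟦X⟧ where
  mul_eq_one_symm {f g} hfg := by
    have h0 : constantCoeff f * constantCoeff g = 1 := by rw [← map_mul, hfg, map_one]
    let u : Rˣ := ⟨constantCoeff f, constantCoeff g, h0, mul_eq_one_symm h0⟩
    have hg : g = invOfUnit f u :=
      calc g = invOfUnit f u * f * g := by rw [invOfUnit_mul f u rfl, one_mul]
        _ = invOfUnit f u := by rw [mul_assoc, hfg, mul_one]
    rw [hg, invOfUnit_mul f u rfl]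

variable [Semiring R]

/-- `(z⁻ˡ F)₊`, the part of `z⁻ˡ F` with nonnegative exponents. -/
noncomputable def shiftDown (l : ℕ) (F : R⟦X⟧) : R⟦X⟧ :=
  mk fun i => coeff (l + i) F

@[simp]
theorem coeff_shiftDown (l i : ℕ) (F : R⟦X⟧) : coeff i (shiftDown l F) = coeff (l + i) F :=
  coeff_mk _ _

theorem coeff_mul_C_mul (f g : R⟦X⟧) (r : R) (u : ℕ) :
    coeff u (f * C r * g) = ∑ i ∈ range (u + 1), coeff i f * r * coeff (u - i) g := by
  rw [coeff_mul, Nat.sum_antidiagonal_eq_sum_range_succ_mk]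
  simp only [coeff_mul_C]

theorem coeff_add_mul (F f : R⟦X⟧) (l k : ℕ) :
    coeff (l + k) (F * f) =
      ∑ p ∈ Icc 1 l, coeff (l - p) F * coeff (p + k) f + coeff k (shiftDown l F * f) := by
  rw [coeff_mul, Nat.sum_antidiagonal_eq_sum_range_succ (fun i j => coeff i F * coeff j f),
    Nat.succ_eq_add_one, add_assoc, sum_range_add, coeff_mul,
    Nat.sum_antidiagonal_eq_sum_range_succ (fun i j => coeff i (shiftDown l F) * coeff j f)]
  congr 1
  · refine sum_nbij' (fun u => l - u) (fun p => l - p) ?_ ?_ ?_ ?_ ?_ <;>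
      simp only [mem_range, mem_Icc] <;> intro u hu
    any_goals omega
    rw [Nat.sub_sub_self hu.le, Nat.sub_add_comm hu.le]
  · simp only [coeff_shiftDown, Nat.add_sub_add_left]

end PowerSeries

section

variable {n : ℕ} (Ψ : ℕ → Matrix (Fin n) (Fin n) ℂ)

/-- `Ψ(-z)ᵀ`. -/
noncomputable abbrev waveDual : PowerSeries (Matrix (Fin n) (Fin n) ℂ) :=
  mk fun k => ((-1 : ℂ) ^ k) • (Ψ k)ᵀ

theorem coeff_mk_mul_C_mul_waveDual (r : Matrix (Fin n) (Fin n) ℂ) (u : ℕ) :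
    coeff u (mk Ψ * C r * waveDual Ψ) =
      ∑ i ∈ range (u + 1), ((-1 : ℂ) ^ i) • (Ψ (u - i) * r * (Ψ i)ᵀ) := by
  rw [coeff_mul_C_mul, ← sum_range_reflect]
  refine sum_congr rfl fun i hi => ?_
  rw [coeff_mk, coeff_mk, add_tsub_cancel_right, Nat.sub_sub_self (mem_range_succ_iff.mp hi),
    mul_smul_comm]

theorem rAction_eq_coeff_shiftDown_mul (hΨ : waveDual Ψ * mk Ψ = 1)
    (r : Matrix (Fin n) (Fin n) ℂ) (l k : ℕ) :
    rAction Ψ r l k = coeff k (shiftDown l (mk Ψ * C r * waveDual Ψ) * mk Ψ) := by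
  set E := mk Ψ * C r * waveDual Ψ
  have hEΨ : E * mk Ψ = mk Ψ * C r := by rw [mul_assoc, hΨ, mul_one]
  have hsplit := coeff_add_mul E (mk Ψ) l k
  rw [hEΨ, coeff_mul_C, coeff_mk] at hsplit
  have hcorrection : ∑ p ∈ Icc 1 l, ∑ q ∈ range (l - p + 1),
      ((-1 : ℂ) ^ (l - p - q)) • (Ψ q * r * (Ψ (l - p - q))ᵀ * Ψ (p + k)) =
      ∑ p ∈ Icc 1 l, coeff (l - p) E * coeff (p + k) (mk Ψ) := by
    refine sum_congr rfl fun p _ => ?_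
    simp only [E, coeff_mul_C_mul, coeff_mk, sum_mul, mul_smul_comm, smul_mul_assoc]
  rw [rAction, hsplit, hcorrection, add_sub_cancel_left]

theorem sum_rAction_mul_transpose (hΨ : mk Ψ * waveDual Ψ = 1)
    (r : Matrix (Fin n) (Fin n) ℂ) (l k : ℕ) :
    ∑ m ∈ range (k + 1), ((-1 : ℂ) ^ m) • (rAction Ψ r l (k - m) * (Ψ m)ᵀ) =
      coeff (l + k) (mk Ψ * C r * waveDual Ψ) := by
  have hmk : mk (rAction Ψ r l) = shiftDown l (mk Ψ * C r * waveDual Ψ) * mk Ψ :=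
    PowerSeries.ext fun j => by
      rw [coeff_mk, rAction_eq_coeff_shiftDown_mul Ψ (mul_eq_one_symm hΨ)]
  calc ∑ m ∈ range (k + 1), ((-1 : ℂ) ^ m) • (rAction Ψ r l (k - m) * (Ψ m)ᵀ)
      = coeff k (mk (rAction Ψ r l) * waveDual Ψ) := by
        rw [coeff_mul, ← Nat.sum_antidiagonal_swap]
        simp only [Prod.fst_swap, Prod.snd_swap]
        rw [Nat.sum_antidiagonal_eq_sum_range_succ fun i j => coeff j (mk _) * coeff i (waveDual Ψ)]
        simp only [coeff_mk, mul_smul_comm]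
    _ = coeff (l + k) (mk Ψ * C r * waveDual Ψ) := by
        rw [hmk, mul_assoc, hΨ, mul_one, coeff_shiftDown]

end

theorem gplus_action_identity_general (n : ℕ) (Ψ : ℕ → Matrix (Fin n) (Fin n) ℂ)
    (h : (PowerSeries.mk Ψ) *
        (PowerSeries.mk fun k => ((-1 : ℂ) ^ k) • (Ψ k)ᵀ) = 1)
    (r : Matrix (Fin n) (Fin n) ℂ) (l : ℕ) :
    -(rAction Ψ r l 3 * (Ψ 0)ᵀ) + rAction Ψ r l 2 * (Ψ 1)ᵀ
        - rAction Ψ r l 1 * (Ψ 2)ᵀ + rAction Ψ r l 0 * (Ψ 3)ᵀ =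
      -∑ i ∈ Finset.range (l + 4), ((-1 : ℂ) ^ i) • (Ψ (l + 3 - i) * r * (Ψ i)ᵀ) := by
  have key := sum_rAction_mul_transpose Ψ h r l 3
  rw [coeff_mk_mul_C_mul_waveDual, show l + 3 + 1 = l + 4 from rfl] at key
  rw [← key]
  simp only [sum_range_succ, sum_range_zero]
  norm_num
  abel

/-- Let `Ψ(z) = ∑_{k≥0} Ψ_k z^k` satisfy `Ψ(z)Ψ(-z)ᵗ = Id`, let `r ∈ Matₙ(ℂ)` and `l ≥ 1`.
Then
`-((rζ^l).Ψ₃)Ψ₀ᵗ + ((rζ^l).Ψ₂)Ψ₁ᵗ - ((rζ^l).Ψ₁)Ψ₂ᵗ + ((rζ^l).Ψ₀)Ψ₃ᵗ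
  = -∑_{i=0}^{l+3} (-1)^i Ψ_{l+3-i} r Ψ_iᵗ`. -/
theorem gplus_action_identity (n : ℕ) (Ψ : ℕ → Matrix (Fin n) (Fin n) ℂ)
    (h : (PowerSeries.mk Ψ) *
        (PowerSeries.mk fun k => ((-1 : ℂ) ^ k) • (Ψ k)ᵀ) = 1)
    (r : Matrix (Fin n) (Fin n) ℂ) (l : ℕ) (hl : 1 ≤ l) :
    -(rAction Ψ r l 3 * (Ψ 0)ᵀ) + rAction Ψ r l 2 * (Ψ 1)ᵀ
        - rAction Ψ r l 1 * (Ψ 2)ᵀ + rAction Ψ r l 0 * (Ψ 3)ᵀ =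
      -∑ i ∈ Finset.range (l + 4), ((-1 : ℂ) ^ i) • (Ψ (l + 3 - i) * r * (Ψ i)ᵀ) :=
  gplus_action_identity_general n Ψ h r l
end

section
/- Suppose matrices Ψ_k(ε) ∈ Mat_n depend differentiably on a parameter ε and satisfy Σ_{i+j=N} (−1)^j Ψ_i(ε) Ψ_j(ε)^t = δ_{N,0} Id for all N and all ε. Writing Ψ̇_k for dΨ_k/dε at ε = 0 and [M] for the sum of entries of M, one has [ (Ψ_0^t Ψ_3)˙ Ψ_0^t Ψ_0 − (Ψ_0^t Ψ_2)˙ Ψ_1^t Ψ_0 + (Ψ_0^t Ψ_1)˙ Ψ_2^t Ψ_0 − (Ψ_0^t Ψ_0)˙ Ψ_3^t Ψ_0 ] = [ Ψ_0^t Ψ̇_3 Ψ_0^t Ψ_0 − Ψ_0^t Ψ̇_2 Ψ_1^t Ψ_0 + Ψ_0^t Ψ̇_1 Ψ_2^t Ψ_0 − Ψ_0^t Ψ̇_0 Ψ_3^t Ψ_0 ], where (AB)˙ = ȦB + AḂ. -/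
/-! Differentiating the left factor `Ψ₀ᵀ` in `(Ψ₀ᵀΨₖ)˙` contributes exactly
`Ψ̇₀ᵀ (Ψ₃Ψ₀ᵀ - Ψ₂Ψ₁ᵀ + Ψ₁Ψ₂ᵀ - Ψ₀Ψ₃ᵀ) Ψ₀`, and the middle factor is the `N = 3`
orthogonality relation at `ε = 0`, hence zero. So the two sides agree already as matrices,
before taking `[·]`. -/

open Matrix Finset

theorem sum_antidiagonal_three_neg_one_pow_smul {R M : Type*} [Ring R] [AddCommGroup M]
    [Module R M] (f : ℕ × ℕ → M) :
    ∑ p ∈ antidiagonal 3, ((-1 : R) ^ p.2) • f p = f (3, 0) - f (2, 1) + f (1, 2) - f (0, 3) := by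
  simp only [Nat.sum_antidiagonal_eq_sum_range_succ_mk, Nat.succ_eq_add_one, Nat.reduceAdd,
    sum_range_succ, range_one, sum_singleton, tsub_zero, pow_succ, pow_zero, mul_neg, mul_one,
    neg_neg, neg_smul, one_smul, Nat.add_one_sub_one, Nat.reduceSub, tsub_self]
  abel

theorem alternating_product_rule_expansion {A : Type*} [Ring A] (d q r : A) (x y e : ℕ → A) :
    (d * x 3 + q * e 3) * y 0 * r - (d * x 2 + q * e 2) * y 1 * r
        + (d * x 1 + q * e 1) * y 2 * r - (d * x 0 + q * e 0) * y 3 * r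
      = q * e 3 * y 0 * r - q * e 2 * y 1 * r + q * e 1 * y 2 * r - q * e 0 * y 3 * r
        + d * (x 3 * y 0 - x 2 * y 1 + x 1 * y 2 - x 0 * y 3) * r := by
  noncomm_ring

theorem frozen_derivative_identity_general (n : ℕ)
    (Ψ : ℕ → ℝ → Matrix (Fin n) (Fin n) ℝ) (D : ℕ → Matrix (Fin n) (Fin n) ℝ)
    (horth : ∀ (ε : ℝ) (N : ℕ),
      ∑ p ∈ Finset.HasAntidiagonal.antidiagonal N, ((-1 : ℝ) ^ p.2) • (Ψ p.1 ε * (Ψ p.2 ε)ᵀ) =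
        if N = 0 then 1 else 0) :
    (∑ i, ∑ j,
        ((((D 0)ᵀ * Ψ 3 0 + (Ψ 0 0)ᵀ * D 3) * (Ψ 0 0)ᵀ * Ψ 0 0)
          - (((D 0)ᵀ * Ψ 2 0 + (Ψ 0 0)ᵀ * D 2) * (Ψ 1 0)ᵀ * Ψ 0 0)
          + (((D 0)ᵀ * Ψ 1 0 + (Ψ 0 0)ᵀ * D 1) * (Ψ 2 0)ᵀ * Ψ 0 0)
          - (((D 0)ᵀ * Ψ 0 0 + (Ψ 0 0)ᵀ * D 0) * (Ψ 3 0)ᵀ * Ψ 0 0)) i j) =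
      ∑ i, ∑ j,
        (((Ψ 0 0)ᵀ * D 3 * (Ψ 0 0)ᵀ * Ψ 0 0
          - (Ψ 0 0)ᵀ * D 2 * (Ψ 1 0)ᵀ * Ψ 0 0
          + (Ψ 0 0)ᵀ * D 1 * (Ψ 2 0)ᵀ * Ψ 0 0
          - (Ψ 0 0)ᵀ * D 0 * (Ψ 3 0)ᵀ * Ψ 0 0) i j) := by
  have horth3 : Ψ 3 0 * (Ψ 0 0)ᵀ - Ψ 2 0 * (Ψ 1 0)ᵀ + Ψ 1 0 * (Ψ 2 0)ᵀ - Ψ 0 0 * (Ψ 3 0)ᵀ = 0 := by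
    simpa [sum_antidiagonal_three_neg_one_pow_smul] using horth 0 3
  rw [alternating_product_rule_expansion (D 0)ᵀ (Ψ 0 0)ᵀ (Ψ 0 0) (Ψ · 0) (fun k => (Ψ k 0)ᵀ) D,
    horth3, Matrix.mul_zero, Matrix.zero_mul, add_zero]

/-- Suppose matrices `Ψ_k(ε)` depend differentiably on `ε` and satisfy the orthogonality
relations `∑_{i+j=N} (-1)^j Ψ_i(ε) Ψ_j(ε)ᵗ = δ_{N,0} Id` for all `N` and `ε`.  Writing
`Ψ̇_k = D k` for the derivative at `ε = 0`, `P k = Ψ_k(0)`, and `[M] = ∑_{i,j} M_{ij}`, one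
has
`[(Ψ₀ᵗΨ₃)˙Ψ₀ᵗΨ₀ - (Ψ₀ᵗΨ₂)˙Ψ₁ᵗΨ₀ + (Ψ₀ᵗΨ₁)˙Ψ₂ᵗΨ₀ - (Ψ₀ᵗΨ₀)˙Ψ₃ᵗΨ₀]
  = [Ψ₀ᵗΨ̇₃Ψ₀ᵗΨ₀ - Ψ₀ᵗΨ̇₂Ψ₁ᵗΨ₀ + Ψ₀ᵗΨ̇₁Ψ₂ᵗΨ₀ - Ψ₀ᵗΨ̇₀Ψ₃ᵗΨ₀]`,
where `(Ψ₀ᵗΨ_k)˙ = Ψ̇₀ᵗΨ_k + Ψ₀ᵗΨ̇_k`. -/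
theorem frozen_derivative_identity (n : ℕ)
    (Ψ : ℕ → ℝ → Matrix (Fin n) (Fin n) ℝ) (D : ℕ → Matrix (Fin n) (Fin n) ℝ)
    (hdiff : ∀ k (i j : Fin n), HasDerivAt (fun ε => Ψ k ε i j) (D k i j) 0)
    (horth : ∀ (ε : ℝ) (N : ℕ),
      ∑ p ∈ Finset.HasAntidiagonal.antidiagonal N, ((-1 : ℝ) ^ p.2) • (Ψ p.1 ε * (Ψ p.2 ε)ᵀ) =
        if N = 0 then 1 else 0) :
    (∑ i, ∑ j,
        ((((D 0)ᵀ * Ψ 3 0 + (Ψ 0 0)ᵀ * D 3) * (Ψ 0 0)ᵀ * Ψ 0 0)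
          - (((D 0)ᵀ * Ψ 2 0 + (Ψ 0 0)ᵀ * D 2) * (Ψ 1 0)ᵀ * Ψ 0 0)
          + (((D 0)ᵀ * Ψ 1 0 + (Ψ 0 0)ᵀ * D 1) * (Ψ 2 0)ᵀ * Ψ 0 0)
          - (((D 0)ᵀ * Ψ 0 0 + (Ψ 0 0)ᵀ * D 0) * (Ψ 3 0)ᵀ * Ψ 0 0)) i j) =
      ∑ i, ∑ j,
        (((Ψ 0 0)ᵀ * D 3 * (Ψ 0 0)ᵀ * Ψ 0 0
          - (Ψ 0 0)ᵀ * D 2 * (Ψ 1 0)ᵀ * Ψ 0 0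
          + (Ψ 0 0)ᵀ * D 1 * (Ψ 2 0)ᵀ * Ψ 0 0
          - (Ψ 0 0)ᵀ * D 0 * (Ψ 3 0)ᵀ * Ψ 0 0) i j) :=
  frozen_derivative_identity_general n Ψ D horth
end
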